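/- Let N ≥ 1, let x_0, x_1, …, x_N be distinct points on the unit circle (the boundary of the open unit disk D ⊂ ℝ²), and let Ω be a nonempty open subset of ℝ² whose closure is contained in D. Then there exist bounded Lebesgue-measurable functions κ_{ij} : ℝ² → ℝ, indexed by pairs (i, j) with 1 ≤ i ≤ j ≤ N, each vanishing at every point outside the closure of Ω, such that for all pairs (i', j') with 1 ≤ i' ≤ j' ≤ N one has ∫_{ℝ²} κ_{ij}(x) · (1/π²) ⟨G_{i'}(x), G_{j'}(x)⟩ dx = 1 if (i, j) = (i', j') and = 0 otherwise. (This combines Lemma 3.4 and Proposition 4.1 of the paper: existence of the biorthogonal conductivity perturbation shape functions κ_{ij} satisfying conditions (3.8) for the unit disk.) -/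

import Mathlib

/-!
Identify the plane with `ℂ`. Then `⟪G_i, G_j⟫ = Re (g_i * conj g_j)` for the rational functions
`g_n z = (z - x_n)⁻¹ - (z - x_0)⁻¹`. A real relation `∑ c_ij Re (g_i * conj g_j) = 0` on `Ω`
is, up to a factor `2`, the restriction to the totally real plane `w = conj z` of the relation
`∑ (c_ij + c_ji) g_i(z) g_j*(w) = 0`, where `g_j*` has the conjugate poles. Both sides are
holomorphic in `(z, w)`, so the relation holds off the poles, and then the simple poles of the
`g_n` force `c + cᵀ = 0`. Hence the functions `∇u_i⁰ · ∇u_j⁰`, `i ≤ j`, are linearly independent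
on `Ω`, their Gram matrix in `L²(closure Ω)` is invertible, and the `κ_ij` are the dual
combinations of these functions, cut off outside `closure Ω`.
-/

open MeasureTheory Finset

/-- The vector field `G_n(x) = (x - x_n)/‖x - x_n‖² - (x - x_0)/‖x - x_0‖²`,
where electrode `n+1` (for `n : Fin N`) is located at `x n.succ` and electrode `0` at `x 0`.
One has `G_n = -π ∇u_n⁰` for the Neumann-function differences `u_n⁰` of the unit disk. -/
noncomputable def G {N : ℕ} (x : Fin (N + 1) → EuclideanSpace ℝ (Fin 2)) (n : Fin N)
    (p : EuclideanSpace ℝ (Fin 2)) : EuclideanSpace ℝ (Fin 2) :=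
  (‖p - x n.succ‖ ^ 2)⁻¹ • (p - x n.succ) - (‖p - x 0‖ ^ 2)⁻¹ • (p - x 0)

open Filter Topology ComplexConjugate

section Gram

variable {X ι : Type*} [MeasurableSpace X] [Fintype ι] {μ : Measure X} {f : ι → X → ℝ}

noncomputable def l2Gram (μ : Measure X) (f : ι → X → ℝ) : Matrix ι ι ℝ :=
  fun i j => ∫ x, f i x * f j x ∂μ

lemma integrable_sum_mul (hf : ∀ i j, Integrable (fun x => f i x * f j x) μ) (d : ι → ℝ)
    (j : ι) :
    Integrable (fun x => (∑ k, d k * f k x) * f j x) μ := by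
  simp only [Finset.sum_mul, mul_assoc]
  exact integrable_finsetSum _ fun k _ => (hf k j).const_mul _

lemma integral_sum_mul_eq_vecMul (hf : ∀ i j, Integrable (fun x => f i x * f j x) μ)
    (d : ι → ℝ) (j : ι) :
    ∫ x, (∑ k, d k * f k x) * f j x ∂μ = Matrix.vecMul d (l2Gram μ f) j := by
  simp only [Finset.sum_mul, mul_assoc]
  rw [integral_finsetSum _ fun k _ => (hf k j).const_mul _]
  simp only [integral_const_mul, Matrix.vecMul, dotProduct, l2Gram]

lemma isUnit_l2Gram [DecidableEq ι] (hf : ∀ i j, Integrable (fun x => f i x * f j x) μ)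
    (hind : ∀ d : ι → ℝ, (fun x => ∑ i, d i * f i x) =ᵐ[μ] 0 → d = 0) :
    IsUnit (l2Gram μ f) := by
  refine Matrix.vecMul_injective_iff_isUnit.mp fun d e hde => sub_eq_zero.mp (hind _ ?_)
  set c := d - e
  have hc : Matrix.vecMul c (l2Gram μ f) = 0 := by
    rw [Matrix.sub_vecMul]; exact sub_eq_zero.mpr hde
  -- `∫ (∑ c f)² = c ⬝ᵥ (c ᵥ* Gram) = 0`
  have hsq : ∀ x, (∑ k, c k * f k x) ^ 2 = ∑ j, c j * ((∑ k, c k * f k x) * f j x) := by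
    intro x; rw [sq, Finset.mul_sum]; exact Finset.sum_congr rfl fun j _ => by ring
  have hint : Integrable (fun x => (∑ k, c k * f k x) ^ 2) μ := by
    simp only [hsq]
    exact integrable_finsetSum _ fun j _ => (integrable_sum_mul hf c j).const_mul _
  have hzero : ∫ x, (∑ k, c k * f k x) ^ 2 ∂μ = 0 := by
    simp only [hsq]
    rw [integral_finsetSum _ fun j _ => (integrable_sum_mul hf c j).const_mul _]
    simp [integral_const_mul, integral_sum_mul_eq_vecMul hf, hc]
  filter_upwards [(integral_eq_zero_iff_of_nonneg (fun x => sq_nonneg _) hint).mp hzero]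
    with x hx
  simpa using hx

theorem exists_biorthogonal_combination [DecidableEq ι]
    (hf : ∀ i j, Integrable (fun x => f i x * f j x) μ)
    (hind : ∀ d : ι → ℝ, (fun x => ∑ i, d i * f i x) =ᵐ[μ] 0 → d = 0) :
    ∃ a : ι → ι → ℝ, ∀ i j,
      ∫ x, (∑ k, a i k * f k x) * f j x ∂μ = if i = j then 1 else 0 := by
  refine ⟨((l2Gram μ f)⁻¹ : Matrix ι ι ℝ), fun i j => ?_⟩
  rw [integral_sum_mul_eq_vecMul hf]
  change ((l2Gram μ f)⁻¹ * l2Gram μ f) i j = if i = j then 1 else 0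
  rw [Matrix.nonsing_inv_mul _ ((Matrix.isUnit_iff_isUnit_det _).mp (isUnit_l2Gram hf hind)),
    Matrix.one_apply]

end Gram

lemma exists_forall_abs_indicator_le {X : Type*} [TopologicalSpace X] {K : Set X}
    (hK : IsCompact K) {g : X → ℝ} (hg : ContinuousOn g K) : ∃ C, ∀ p, |K.indicator g p| ≤ C := by
  obtain ⟨C, hC⟩ := hK.exists_bound_of_continuousOn hg
  refine ⟨max C 0, fun p => ?_⟩
  by_cases hp : p ∈ K
  · rw [Set.indicator_of_mem hp, ← Real.norm_eq_abs]
    exact le_max_of_le_left (hC p hp)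
  · simp [hp]

lemma sum_subtype_le_eq_sum_sum {α M : Type*} [Fintype α] [LE α] [DecidableLE α]
    [NonUnitalNonAssocSemiring M] (d : {q : α × α // q.1 ≤ q.2} → M) (R : α → α → M) :
    ∑ q, d q * R q.1.1 q.1.2 =
      ∑ i, ∑ j, (if h : i ≤ j then d ⟨(i, j), h⟩ else 0) * R i j := by
  rw [← Fintype.sum_prod_type',
    ← Fintype.sum_subtype_add_sum_subtype (fun q : α × α => q.1 ≤ q.2),
    Fintype.sum_eq_zero (α := {q : α × α // ¬ q.1 ≤ q.2}) _
      fun q => by rw [dif_neg q.2, zero_mul],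
    add_zero]
  exact Finset.sum_congr rfl fun q _ => by rw [dif_pos q.2]

lemma AnalyticOnNhd.eqOn_zero_of_preconnected_of_eventually_ofReal_eq_zero {E : Type*}
    [NormedAddCommGroup E] [NormedSpace ℂ E] {f : ℂ → E} {U : Set ℂ}
    (hf : AnalyticOnNhd ℂ f U) (hU : IsPreconnected U) (h₀ : (0 : ℂ) ∈ U)
    (h : ∀ᶠ x : ℝ in 𝓝 0, f x = 0) : Set.EqOn f 0 U := by
  refine hf.eqOn_zero_of_preconnected_of_frequently_eq_zero hU h₀ ?_
  have hreal : Tendsto ((↑) : ℝ → ℂ) (𝓝[≠] 0) (𝓝[≠] 0) :=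
    tendsto_nhdsWithin_of_tendsto_nhds_of_eventually_within _
      ((Complex.continuous_ofReal.tendsto' 0 0 Complex.ofReal_zero).mono_left
        nhdsWithin_le_nhds)
      (eventually_nhdsWithin_of_forall fun x hx => Complex.ofReal_ne_zero.mpr hx)
  exact hreal.frequently (h.filter_mono nhdsWithin_le_nhds).frequently

lemma AnalyticAt.eventually_eq_zero_of_eventually_ofReal_eq_zero {E : Type*}
    [NormedAddCommGroup E] [NormedSpace ℂ E] [CompleteSpace E] {f : ℂ × ℂ → E}
    (hf : AnalyticAt ℂ f 0)
    (h : ∀ᶠ p : ℝ × ℝ in 𝓝 0, f (p.1, p.2) = 0) : f =ᶠ[𝓝 0] 0 := by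
  obtain ⟨r, hr, hfr⟩ := Metric.eventually_nhds_iff_ball.mp hf.eventually_analyticAt
  obtain ⟨ε, hε, hfε⟩ := Metric.eventually_nhds_iff_ball.mp h
  obtain ⟨ρ, hρ, hρr, hfρ⟩ :
      ∃ ρ > 0, ρ ≤ r ∧ ∀ t s : ℝ, |t| < ρ → |s| < ρ → f (t, s) = 0 := by
    refine ⟨min ε r, lt_min hε hr, min_le_right _ _, fun t s ht hs => hfε (t, s) ?_⟩
    rw [mem_ball_zero_iff, Prod.norm_mk]
    exact max_lt (ht.trans_le (min_le_left _ _)) (hs.trans_le (min_le_left _ _))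
  have hanalytic : ∀ t s : ℂ, ‖t‖ < ρ → ‖s‖ < ρ → AnalyticAt ℂ f (t, s) := fun t s ht hs => by
    refine hfr _ ?_
    rw [mem_ball_zero_iff, Prod.norm_mk]
    exact max_lt (ht.trans_le hρr) (hs.trans_le hρr)
  have hslice1 : ∀ s : ℝ, |s| < ρ → Set.EqOn (fun t => f (t, s)) 0 (Metric.ball 0 ρ) := by
    intro s hs
    refine AnalyticOnNhd.eqOn_zero_of_preconnected_of_eventually_ofReal_eq_zero ?_
      (convex_ball 0 ρ).isPreconnected (Metric.mem_ball_self hρ) ?_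
    · exact fun t ht => (hanalytic t s (by simpa using ht) (by simpa using hs)).comp_of_eq
        (analyticAt_id.prod analyticAt_const) rfl
    · filter_upwards [Metric.ball_mem_nhds (0 : ℝ) hρ] with t ht
      exact hfρ t s (by simpa using ht) hs
  have hslice2 :
      ∀ t ∈ Metric.ball (0 : ℂ) ρ, Set.EqOn (fun s => f (t, s)) 0 (Metric.ball 0 ρ) := by
    intro t ht
    refine AnalyticOnNhd.eqOn_zero_of_preconnected_of_eventually_ofReal_eq_zero ?_
      (convex_ball 0 ρ).isPreconnected (Metric.mem_ball_self hρ) ?_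
    · exact fun s hs => (hanalytic t s (by simpa using ht) (by simpa using hs)).comp_of_eq
        (analyticAt_const.prod analyticAt_id) rfl
    · filter_upwards [Metric.ball_mem_nhds (0 : ℝ) hρ] with s hs
      exact hslice1 s (by simpa using hs) ht
  filter_upwards [Metric.ball_mem_nhds (0 : ℂ × ℂ) hρ] with p hp
  rw [← ball_prod_same] at hp
  exact hslice2 p.1 hp.1 hp.2

lemma AnalyticAt.eventually_eq_zero_of_eventually_conj_eq_zero {E : Type*}
    [NormedAddCommGroup E] [NormedSpace ℂ E] [CompleteSpace E] {F : ℂ × ℂ → E} {z₀ : ℂ}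
    (hF : AnalyticAt ℂ F (z₀, conj z₀)) (h : ∀ᶠ z in 𝓝 z₀, F (z, conj z) = 0) :
    F =ᶠ[𝓝 (z₀, conj z₀)] 0 := by
  -- `L` maps `ℝ × ℝ ⊆ ℂ × ℂ` onto the totally real plane `{(z, conj z)}` and `M` inverts it
  set L : ℂ × ℂ → ℂ × ℂ := fun q =>
    (z₀ + q.1 + Complex.I * q.2, conj z₀ + q.1 - Complex.I * q.2)
  set M : ℂ × ℂ → ℂ × ℂ := fun p =>
    ((p.1 - z₀ + (p.2 - conj z₀)) / 2, (p.1 - z₀ - (p.2 - conj z₀)) / (2 * Complex.I))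
  have hLM : ∀ p, L (M p) = p := fun p => by
    ext <;> simp only [L, M] <;> field_simp <;> ring
  have hΦ : (F ∘ L) =ᶠ[𝓝 0] 0 := by
    refine AnalyticAt.eventually_eq_zero_of_eventually_ofReal_eq_zero
      (hF.comp_of_eq ?_ (by simp [L])) ?_
    · exact ((analyticAt_const.add analyticAt_fst).add
        (analyticAt_const.mul analyticAt_snd)).prod ((analyticAt_const.add analyticAt_fst).sub
        (analyticAt_const.mul analyticAt_snd))
    have hz : Tendsto (fun p : ℝ × ℝ => z₀ + p.1 + Complex.I * p.2) (𝓝 0) (𝓝 z₀) :=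
      Continuous.tendsto' (by fun_prop) _ _ (by simp)
    filter_upwards [hz.eventually h] with p hp
    convert hp using 3
    simp [L, map_add, map_mul, sub_eq_add_neg]
  have hM : Tendsto M (𝓝 (z₀, conj z₀)) (𝓝 0) :=
    Continuous.tendsto' (by fun_prop) _ _ (by simp [M])
  filter_upwards [hM.eventually hΦ] with p hp
  simpa [hLM] using hp

lemma eq_zero_of_sum_mul_inv_sub_eq_zero {ι : Type*} [Fintype ι] [DecidableEq ι] {β : ι → ℂ}
    (hβ : Function.Injective β) {c : ι → ℂ}
    (h : ∀ z ∉ Set.range β, ∑ k, c k * (z - β k)⁻¹ = 0) : c = 0 := by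
  funext k
  set g : ℂ → ℂ := fun z =>
    c k + (z - β k) * ∑ l ∈ Finset.univ.erase k, c l * (z - β l)⁻¹
  have hg : ContinuousAt g (β k) := by
    refine continuousAt_const.add ((continuousAt_id.sub continuousAt_const).mul ?_)
    refine tendsto_finsetSum _ fun l hl => continuousAt_const.mul ?_
    exact (continuousAt_id.sub continuousAt_const).inv₀
      (sub_ne_zero.mpr (hβ.ne (Finset.ne_of_mem_erase hl).symm))
  -- off the poles, `g z` is `z - β k` times the vanishing sum
  have hg0 : ∀ᶠ z in 𝓝[≠] β k, g z = 0 := by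
    have hpoles : ∀ᶠ z in 𝓝[≠] β k, ∀ l, l ≠ k → z ≠ β l :=
      eventually_nhdsWithin_of_eventually_nhds <| eventually_all.mpr fun l => by
        by_cases hl : l = k
        · exact Eventually.of_forall fun _ h => absurd hl h
        · exact (eventually_ne_nhds (hβ.ne (Ne.symm hl))).mono fun _ hz _ => hz
    filter_upwards [hpoles, self_mem_nhdsWithin] with z hz hzk
    have hzk : z - β k ≠ 0 := sub_ne_zero.mpr hzk
    have hz : z ∉ Set.range β := by
      rintro ⟨l, rfl⟩
      by_cases hl : l = k
      · exact hzk (by rw [hl, sub_self])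
      · exact hz l hl rfl
    calc g z = (z - β k) * ∑ l, c l * (z - β l)⁻¹ := by
          rw [← Finset.add_sum_erase _ _ (Finset.mem_univ k), mul_add]
          simp only [g, Finset.mul_sum]
          field_simp
      _ = 0 := by rw [h z hz, mul_zero]
  have := tendsto_nhds_unique (hg.tendsto.mono_left nhdsWithin_le_nhds)
    (tendsto_const_nhds.congr' (EventuallyEq.symm hg0))
  simpa [g] using this

lemma Complex.inv_norm_sq_smul (w : ℂ) : (‖w‖ ^ 2)⁻¹ • w = conj w⁻¹ := by
  rw [RCLike.inv_def w, map_mul, RCLike.conj_conj, RCLike.conj_ofReal, Complex.real_smul,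
    mul_comm]
  rfl

section

variable {N : ℕ}

noncomputable def poleDiff (α : Fin (N + 1) → ℂ) (n : Fin N) (z : ℂ) : ℂ :=
  (z - α n.succ)⁻¹ - (z - α 0)⁻¹

lemma sum_mul_poleDiff (α : Fin (N + 1) → ℂ) (c : Fin N → ℂ) (z : ℂ) :
    ∑ n, c n * poleDiff α n z =
      ∑ k, (Fin.cons (-∑ n, c n) c : Fin (N + 1) → ℂ) k * (z - α k)⁻¹ := by
  simp only [Fin.sum_univ_succ, Fin.cons_zero, Fin.cons_succ, poleDiff, mul_sub,
    Finset.sum_sub_distrib, ← Finset.sum_mul]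
  ring

lemma eq_zero_of_sum_mul_poleDiff_eq_zero {α : Fin (N + 1) → ℂ} (hα : Function.Injective α)
    {c : Fin N → ℂ} (h : ∀ z ∉ Set.range α, ∑ n, c n * poleDiff α n z = 0) : c = 0 := by
  have := eq_zero_of_sum_mul_inv_sub_eq_zero hα fun z hz => (sum_mul_poleDiff α c z) ▸ h z hz
  funext n
  simpa using congrFun this n.succ

lemma analyticAt_poleDiff {α : Fin (N + 1) → ℂ} {z : ℂ} (hz : z ∉ Set.range α) (n : Fin N) :
    AnalyticAt ℂ (poleDiff α n) z := by
  have hne : ∀ k, z - α k ≠ 0 := fun k => sub_ne_zero.mpr fun h => hz ⟨k, h.symm⟩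
  exact ((analyticAt_id.sub analyticAt_const).inv (hne _)).sub
    ((analyticAt_id.sub analyticAt_const).inv (hne _))

lemma conj_poleDiff (α : Fin (N + 1) → ℂ) (n : Fin N) (z : ℂ) :
    conj (poleDiff α n z) = poleDiff (fun k => conj (α k)) n (conj z) := by
  simp [poleDiff, map_sub, map_inv₀]

theorem eq_zero_of_sum_mul_poleDiff_mul_conj_eq_zero {α : Fin (N + 1) → ℂ}
    (hα : Function.Injective α) {Ω : Set ℂ} (hΩ : IsOpen Ω) {z₀ : ℂ} (hz₀ : z₀ ∈ Ω)
    (hpoles : Ω ⊆ (Set.range α)ᶜ) {b : Fin N → Fin N → ℂ}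
    (h : ∀ z ∈ Ω, ∑ i, ∑ j, b i j * (poleDiff α i z * conj (poleDiff α j z)) = 0) : b = 0 := by
  set α' : Fin (N + 1) → ℂ := fun k => conj (α k)
  have hα' : Function.Injective α' := (RingHom.injective _).comp hα
  set W := (Set.range α)ᶜ ×ˢ (Set.range α')ᶜ
  -- `F (z, conj z)` is the given sum
  set F : ℂ × ℂ → ℂ := fun p => ∑ i, ∑ j, b i j * (poleDiff α i p.1 * poleDiff α' j p.2)
  have hF : AnalyticOnNhd ℂ F W := fun p hp =>
    Finset.analyticAt_fun_sum _ fun i _ => Finset.analyticAt_fun_sum _ fun j _ =>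
      analyticAt_const.mul (((analyticAt_poleDiff hp.1 i).comp analyticAt_fst).mul
        ((analyticAt_poleDiff hp.2 j).comp analyticAt_snd))
  have hW : IsPreconnected W := by
    have hrank : 1 < Module.rank ℝ ℂ := by simp [Complex.rank_real_complex]
    exact ((Set.finite_range α).countable.isConnected_compl_of_one_lt_rank
      hrank).isPreconnected.prod
      ((Set.finite_range α').countable.isConnected_compl_of_one_lt_rank hrank).isPreconnected
  have hz₀W : (z₀, conj z₀) ∈ W :=
    ⟨hpoles hz₀, fun ⟨k, hk⟩ => hpoles hz₀ ⟨k, (RingHom.injective _) hk⟩⟩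
  have hF₀ : F =ᶠ[𝓝 (z₀, conj z₀)] 0 := by
    refine (hF _ hz₀W).eventually_eq_zero_of_eventually_conj_eq_zero ?_
    filter_upwards [hΩ.mem_nhds hz₀] with z hz
    simpa [F, α', conj_poleDiff] using h z hz
  have hFW : Set.EqOn F 0 W := hF.eqOn_zero_of_preconnected_of_eventuallyEq_zero hW hz₀W hF₀
  have hrow : ∀ w ∉ Set.range α', ∀ i, ∑ j, b i j * poleDiff α' j w = 0 := fun w hw =>
    congrFun <| eq_zero_of_sum_mul_poleDiff_eq_zero hα fun z hz => by
      refine Eq.trans ?_ (hFW (show (z, w) ∈ W from ⟨hz, hw⟩))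
      simp only [F, Finset.sum_mul]
      exact Finset.sum_congr rfl fun i _ => Finset.sum_congr rfl fun j _ => by ring
  funext i j
  exact congrFun (eq_zero_of_sum_mul_poleDiff_eq_zero hα' fun w hw => hrow w hw i) j

lemma map_G (e : EuclideanSpace ℝ (Fin 2) ≃ₗᵢ[ℝ] ℂ)
    (x : Fin (N + 1) → EuclideanSpace ℝ (Fin 2)) (n : Fin N) (p : EuclideanSpace ℝ (Fin 2)) :
    e (G x n p) = conj (poleDiff (fun k => e (x k)) n (e p)) := by
  simp only [G, poleDiff, map_sub, map_smul, ← e.norm_map (p - _), Complex.inv_norm_sq_smul]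

lemma inner_G (e : EuclideanSpace ℝ (Fin 2) ≃ₗᵢ[ℝ] ℂ)
    (x : Fin (N + 1) → EuclideanSpace ℝ (Fin 2)) (i j : Fin N) (p : EuclideanSpace ℝ (Fin 2)) :
    inner ℝ (G x i p) (G x j p) = (poleDiff (fun k => e (x k)) i (e p) *
      conj (poleDiff (fun k => e (x k)) j (e p))).re := by
  rw [inner_map_complex e, map_G, map_G, Complex.conj_conj, mul_comm]

lemma measurable_G (x : Fin (N + 1) → EuclideanSpace ℝ (Fin 2)) (n : Fin N) :
    Measurable (G x n) := by
  unfold G; fun_prop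

lemma continuousOn_G (x : Fin (N + 1) → EuclideanSpace ℝ (Fin 2)) (n : Fin N) :
    ContinuousOn (G x n) (Set.range x)ᶜ := by
  have hne : ∀ k, ∀ p ∈ (Set.range x)ᶜ, ‖p - x k‖ ^ 2 ≠ 0 := fun k p hp =>
    pow_ne_zero _ (norm_ne_zero_iff.mpr (sub_ne_zero.mpr fun h => hp ⟨k, h.symm⟩))
  unfold G
  fun_prop (disch := exact hne _)

/-- `∇u_i⁰ · ∇u_j⁰` -/
noncomputable def gradDot (x : Fin (N + 1) → EuclideanSpace ℝ (Fin 2)) (i j : Fin N)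
    (p : EuclideanSpace ℝ (Fin 2)) : ℝ :=
  1 / Real.pi ^ 2 * inner ℝ (G x i p) (G x j p)

lemma measurable_gradDot (x : Fin (N + 1) → EuclideanSpace ℝ (Fin 2)) (i j : Fin N) :
    Measurable (gradDot x i j) :=
  measurable_const.mul ((measurable_G x i).inner (measurable_G x j))

lemma continuousOn_gradDot (x : Fin (N + 1) → EuclideanSpace ℝ (Fin 2)) (i j : Fin N) :
    ContinuousOn (gradDot x i j) (Set.range x)ᶜ :=
  continuousOn_const.mul ((continuousOn_G x i).inner (continuousOn_G x j))

lemma ofReal_gradDot (e : EuclideanSpace ℝ (Fin 2) ≃ₗᵢ[ℝ] ℂ)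
    (x : Fin (N + 1) → EuclideanSpace ℝ (Fin 2)) (i j : Fin N) (p : EuclideanSpace ℝ (Fin 2)) :
    (gradDot x i j p : ℂ) = (poleDiff (fun k => e (x k)) i (e p) *
      conj (poleDiff (fun k => e (x k)) j (e p)) + poleDiff (fun k => e (x k)) j (e p) *
      conj (poleDiff (fun k => e (x k)) i (e p))) / (2 * Real.pi ^ 2) := by
  rw [gradDot, inner_G e, Complex.ofReal_mul, Complex.re_eq_add_conj]
  simp only [map_mul, Complex.conj_conj]
  push_cast
  ring

theorem eq_zero_of_sum_mul_gradDot_eq_zero {x : Fin (N + 1) → EuclideanSpace ℝ (Fin 2)}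
    (hx : Function.Injective x) {Ω : Set (EuclideanSpace ℝ (Fin 2))} (hΩ : IsOpen Ω)
    (hΩne : Ω.Nonempty) (hpoles : Ω ⊆ (Set.range x)ᶜ)
    {d : {q : Fin N × Fin N // q.1 ≤ q.2} → ℝ}
    (h : ∀ p ∈ Ω, ∑ q, d q * gradDot x q.1.1 q.1.2 p = 0) : d = 0 := by
  set c : Fin N → Fin N → ℝ := fun i j => if h : i ≤ j then d ⟨(i, j), h⟩ else 0
  set e : EuclideanSpace ℝ (Fin 2) ≃ₗᵢ[ℝ] ℂ := Complex.orthonormalBasisOneI.repr.symm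
  obtain ⟨p₀, hp₀⟩ := hΩne
  have hsymm : (fun i j => ((c i j + c j i : ℝ) : ℂ)) = 0 := by
    refine eq_zero_of_sum_mul_poleDiff_mul_conj_eq_zero (e.injective.comp hx)
      (e.toHomeomorph.isOpenMap Ω hΩ) (Set.mem_image_of_mem e hp₀) ?_ ?_
    · rintro _ ⟨p, hp, rfl⟩ ⟨k, hk⟩
      exact hpoles hp ⟨k, e.injective hk⟩
    rintro _ ⟨p, hp, rfl⟩
    set g := fun n => poleDiff (fun k => e (x k)) n (e p)
    calc ∑ i, ∑ j, ((c i j + c j i : ℝ) : ℂ) * (g i * conj (g j))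
        = ∑ i, ∑ j, (c i j : ℂ) * (g i * conj (g j) + g j * conj (g i)) := by
          simp only [Complex.ofReal_add, add_mul, Finset.sum_add_distrib, mul_add]
          rw [Finset.sum_comm (f := fun i j => (c j i : ℂ) * (g i * conj (g j)))]
      _ = 2 * Real.pi ^ 2 * ((∑ i, ∑ j, c i j * gradDot x i j p : ℝ) : ℂ) := by
          simp only [ofReal_gradDot e, g, Complex.ofReal_sum, Complex.ofReal_mul,
            Finset.mul_sum]
          refine Finset.sum_congr rfl fun i _ => Finset.sum_congr rfl fun j _ => ?_
          field_simp
      _ = 0 := by rw [← sum_subtype_le_eq_sum_sum, h p hp, Complex.ofReal_zero, mul_zero]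
  funext ⟨⟨i, j⟩, hij⟩
  have hcij := congrFun₂ hsymm i j
  simp only [Pi.zero_apply, Complex.ofReal_eq_zero, c, dif_pos hij] at hcij
  change i ≤ j at hij
  rcases hij.lt_or_eq with hlt | rfl
  · simpa [dif_neg hlt.not_ge] using hcij
  · simpa using hcij

theorem eq_zero_of_sum_mul_gradDot_ae_eq_zero {x : Fin (N + 1) → EuclideanSpace ℝ (Fin 2)}
    (hx : Function.Injective x) {Ω : Set (EuclideanSpace ℝ (Fin 2))} (hΩ : IsOpen Ω)
    (hΩne : Ω.Nonempty) (hpoles : closure Ω ⊆ (Set.range x)ᶜ)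
    {d : {q : Fin N × Fin N // q.1 ≤ q.2} → ℝ}
    (h : (fun p => ∑ q, d q * gradDot x q.1.1 q.1.2 p) =ᵐ[volume.restrict (closure Ω)] 0) :
    d = 0 := by
  refine eq_zero_of_sum_mul_gradDot_eq_zero hx hΩ hΩne (subset_closure.trans hpoles) ?_
  refine Measure.eqOn_open_of_ae_eq (ae_restrict_of_ae_restrict_of_subset subset_closure h) hΩ
    ?_ continuousOn_const
  exact continuousOn_finsetSum _ fun q _ => continuousOn_const.mul
    ((continuousOn_gradDot x _ _).mono (subset_closure.trans hpoles))

end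

theorem exists_biorthogonal_perturbations_disk_general
    (N : ℕ)
    (x : Fin (N + 1) → EuclideanSpace ℝ (Fin 2))
    (hx : Function.Injective x)
    (hcirc : ∀ n, ‖x n‖ = 1)
    (Ω : Set (EuclideanSpace ℝ (Fin 2)))
    (hΩopen : IsOpen Ω) (hΩne : Ω.Nonempty)
    (hΩD : closure Ω ⊆ Metric.ball (0 : EuclideanSpace ℝ (Fin 2)) 1) :
    ∃ κ : Fin N → Fin N → EuclideanSpace ℝ (Fin 2) → ℝ,
      ∀ i j : Fin N, i ≤ j →
        Measurable (κ i j) ∧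
        (∃ C : ℝ, ∀ p, |κ i j p| ≤ C) ∧
        (∀ p ∉ closure Ω, κ i j p = 0) ∧
        (∀ i' j' : Fin N, i' ≤ j' →
          ∫ p, κ i j p * ((1 / Real.pi ^ 2) * (inner ℝ (G x i' p) (G x j' p) : ℝ)) =
            if i = i' ∧ j = j' then 1 else 0) := by
  classical
  set K := closure Ω
  have hK : IsCompact K :=
    Metric.isCompact_of_isClosed_isBounded isClosed_closure (Metric.isBounded_ball.subset hΩD)
  have hpoles : K ⊆ (Set.range x)ᶜ := by
    rintro p hp ⟨k, rfl⟩
    simpa [hcirc k] using hΩD hp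
  set f : {q : Fin N × Fin N // q.1 ≤ q.2} → EuclideanSpace ℝ (Fin 2) → ℝ :=
    fun q => gradDot x q.1.1 q.1.2
  have hf : ∀ q, ContinuousOn (f q) K := fun q => (continuousOn_gradDot x _ _).mono hpoles
  obtain ⟨a, ha⟩ := exists_biorthogonal_combination (μ := volume.restrict K) (f := f)
    (fun q r => ((hf q).mul (hf r)).integrableOn_compact hK)
    fun d => eq_zero_of_sum_mul_gradDot_ae_eq_zero hx hΩopen hΩne hpoles
  set κ := fun q => K.indicator fun p => ∑ r, a q r * f r p
  refine ⟨fun i j => if h : i ≤ j then κ ⟨(i, j), h⟩ else 0, fun i j hij => ?_⟩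
  simp only [dif_pos hij]
  refine ⟨?_, ?_, fun p hp => Set.indicator_of_notMem hp _, fun i' j' hij' => ?_⟩
  · exact (Finset.measurable_sum _ fun r _ => measurable_const.mul
      (measurable_gradDot x _ _)).indicator isClosed_closure.measurableSet
  · exact exists_forall_abs_indicator_le hK
      (continuousOn_finsetSum _ fun r _ => continuousOn_const.mul (hf r))
  · change ∫ p, κ ⟨(i, j), hij⟩ p * f ⟨(i', j'), hij'⟩ p = _
    simp only [κ, ← Set.indicator_mul_left]
    rw [integral_indicator isClosed_closure.measurableSet]
    refine (ha ⟨(i, j), hij⟩ ⟨(i', j'), hij'⟩).trans ?_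
    simp [Prod.ext_iff]

/-- Lemma 3.4 + Proposition 4.1: existence of bounded measurable perturbation shape
functions `κ_{ij}` supported in the closure of `Ω`, biorthogonal to the family
`∇u_{i'}⁰ · ∇u_{j'}⁰ = (1/π²)⟨G_{i'}, G_{j'}⟩` in the sense of conditions (3.8). -/
theorem exists_biorthogonal_perturbations_disk
    (N : ℕ) (hN : 1 ≤ N)
    (x : Fin (N + 1) → EuclideanSpace ℝ (Fin 2))
    (hx : Function.Injective x)
    (hcirc : ∀ n, ‖x n‖ = 1)
    (Ω : Set (EuclideanSpace ℝ (Fin 2)))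
    (hΩopen : IsOpen Ω) (hΩne : Ω.Nonempty)
    (hΩD : closure Ω ⊆ Metric.ball (0 : EuclideanSpace ℝ (Fin 2)) 1) :
    ∃ κ : Fin N → Fin N → EuclideanSpace ℝ (Fin 2) → ℝ,
      ∀ i j : Fin N, i ≤ j →
        Measurable (κ i j) ∧
        (∃ C : ℝ, ∀ p, |κ i j p| ≤ C) ∧
        (∀ p ∉ closure Ω, κ i j p = 0) ∧
        (∀ i' j' : Fin N, i' ≤ j' →
          ∫ p, κ i j p * ((1 / Real.pi ^ 2) * (inner ℝ (G x i' p) (G x j' p) : ℝ)) =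
            if i = i' ∧ j = j' then 1 else 0) :=
  exists_biorthogonal_perturbations_disk_general N x hx hcirc Ω hΩopen hΩne hΩD
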